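/- There exists an absolute constant C > 0 such that for every n and every admissible digit datum (A, α) on n bits with ρ ≤ 1/2, one has 2^r · ∫_0^1 |\hat f(θ)| dθ ≤ 2^{C ρ log(1/ρ) n − n}. -/

import Mathlib

open Finset

/-- The indicator function of integers `x < 2^n` whose binary digit at position `j`
equals `α j` for every `j ∈ A`. -/
def digitIndicator (A : Finset ℕ) (α : ℕ → ℕ) (x : ℕ) : ℕ :=
  if ∀ j ∈ A, x / 2 ^ j % 2 = α j then 1 else 0

/-- The normalized Fourier transform `\hat f(λ) = 2^{-n} ∑_{x < 2^n} f(x) e^{2πiλx}`. -/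
noncomputable def fhat (n : ℕ) (A : Finset ℕ) (α : ℕ → ℕ) (lam : ℝ) : ℂ :=
  (2 ^ n : ℂ)⁻¹ * ∑ x ∈ Finset.range (2 ^ n),
    (digitIndicator A α x : ℂ) * Complex.exp (2 * Real.pi * Complex.I * lam * x)


/-!
Since `f` is a product of functions of single binary digits,
`|f̂(θ)| = 2^{-n} ∏_{j < n, j ∉ A} |2 cos (π 2^j θ)|`. As `0 ∈ A`, the exponents `j ∉ A` split
into runs `[m + 1, m + 1 + L)`, one after each `m ∈ A`. By the telescoping identity
`sin t ∏_{i < L} 2 cos (2^i t) = sin (2^L t)`, on a dyadic cell of length `2^{-n}` such a run is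
at most `2^L / (d + 1)`, where `d` counts the cells of length `2^{-L}` between `2^{m+1} θ` and
`ℤ`. This bound depends only on the last `L` binary digits of the cell, while the bounds for the
earlier runs depend only on its first `m` digits, so the sum over cells of the cellwise bound
factorises; a run of length `L` contributes `∑_v 2^L / (d(v) + 1) ≤ 2^{L+1} (L + 1)` by the
harmonic series. Hence `∫ |f̂| ≤ 2^{-n} ∏_{m ∈ A} 2 ℓ_m`, where the lengths `ℓ_m` (run plus `m`)
sum to `n`, and `ℓ ≤ T e^{ℓ / T - 1}` with `T = 1 / ρ` bounds the product by `(2 / ρ)^{r+1}`.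
-/

open Real

lemma sum_digits_div_pow_mod {m n : ℕ} (b : Fin n → Fin m) (j : Fin n) :
    (∑ i, (b i : ℕ) * m ^ (i : ℕ)) / m ^ (j : ℕ) % m = b j := by
  rw [← finFunctionFinEquiv_apply, ← finFunctionFinEquiv_symm_apply_val, Equiv.symm_apply_apply]

lemma sum_range_pow_eq_sum_digits {M : Type*} [AddCommMonoid M] (m n : ℕ) (F : ℕ → M) :
    ∑ x ∈ range (m ^ n), F x = ∑ b : Fin n → Fin m, F (∑ i, (b i : ℕ) * m ^ (i : ℕ)) := by
  rw [sum_range, ← finFunctionFinEquiv.sum_comp]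
  rfl

lemma digitIndicator_sum_digits {n : ℕ} {A : Finset ℕ} (hA : A ⊆ range n) (α : ℕ → ℕ)
    (b : Fin n → Fin 2) :
    digitIndicator A α (∑ i, (b i : ℕ) * 2 ^ (i : ℕ)) =
      if ∀ j : Fin n, (j : ℕ) ∈ A → (b j : ℕ) = α j then 1 else 0 := by
  unfold digitIndicator
  congr 1
  refine propext ⟨fun h j hj => ?_, fun h j hj => ?_⟩
  · rw [← sum_digits_div_pow_mod b j]
    exact h j hj
  · have := h ⟨j, mem_range.mp (hA hj)⟩ hj
    rwa [← sum_digits_div_pow_mod b] at this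

lemma fhat_eq_prod {n : ℕ} {A : Finset ℕ} (hA : A ⊆ range n) (α : ℕ → ℕ) (θ : ℝ) :
    fhat n A α θ = (2 ^ n : ℂ)⁻¹ * ∏ j : Fin n, ∑ d : Fin 2,
      if (j : ℕ) ∈ A → (d : ℕ) = α j then
        Complex.exp (2 * π * Complex.I * θ * ((d : ℕ) * 2 ^ (j : ℕ) : ℕ)) else 0 := by
  rw [fhat, Fintype.prod_sum, sum_range_pow_eq_sum_digits]
  congr 1
  refine sum_congr rfl fun b _ => ?_
  rw [Fintype.prod_ite_zero, digitIndicator_sum_digits hA, ← Complex.exp_sum]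
  push_cast
  split_ifs <;> simp [mul_sum]

lemma norm_one_add_exp_two_mul_I (t : ℝ) :
    ‖1 + Complex.exp (2 * t * Complex.I)‖ = 2 * |cos t| := by
  have h : 1 + Complex.exp (2 * t * Complex.I)
      = 2 * Complex.cos t * Complex.exp (t * Complex.I) := by
    rw [Complex.cos, mul_div_cancel₀ _ two_ne_zero, add_mul, ← Complex.exp_add,
      ← Complex.exp_add]
    ring_nf
    rw [Complex.exp_zero, add_comm]
  rw [h, norm_mul, Complex.norm_exp_ofReal_mul_I, norm_mul, ← Complex.ofReal_cos,
    Complex.norm_real, Real.norm_eq_abs]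
  norm_num

noncomputable def cosProd (S : Finset ℕ) (θ : ℝ) : ℝ := ∏ j ∈ S, 2 * |cos (π * 2 ^ j * θ)|

lemma norm_fhat {n : ℕ} {A : Finset ℕ} (hA : A ⊆ range n) {α : ℕ → ℕ}
    (hα : ∀ j ∈ A, α j ≤ 1) (θ : ℝ) :
    ‖fhat n A α θ‖ = (2 ^ n : ℝ)⁻¹ * cosProd (range n \ A) θ := by
  have hexp (k : ℕ) : Complex.exp (2 * π * Complex.I * θ * k)
      = Complex.exp (2 * (π * k * θ : ℝ) * Complex.I) := by
    push_cast
    ring_nf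
  have hfactor (j : ℕ) : ‖∑ d : Fin 2, if j ∈ A → (d : ℕ) = α j then
      Complex.exp (2 * π * Complex.I * θ * ((d : ℕ) * 2 ^ j : ℕ)) else 0‖ =
      if j ∈ A then 1 else 2 * |cos (π * 2 ^ j * θ)| := by
    have hunit (k : ℕ) : ‖Complex.exp (2 * π * Complex.I * θ * k)‖ = 1 := by
      simp [Complex.norm_exp]
    by_cases hj : j ∈ A
    · rcases Nat.le_one_iff_eq_zero_or_eq_one.mp (hα j hj) with h | h <;>
        simp only [Fin.sum_univ_two, hj, h, hunit, forall_const, Fin.val_zero, Fin.val_one,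
          zero_ne_one, one_ne_zero, if_true, if_false, add_zero, zero_add]
    simp only [Fin.sum_univ_two, hexp, Fin.val_zero, Fin.val_one, zero_mul, one_mul]
    simpa [hj] using norm_one_add_exp_two_mul_I (π * 2 ^ j * θ)
  rw [fhat_eq_prod hA, norm_mul, norm_prod, cosProd, sdiff_eq_filter, prod_filter, prod_range]
  simp only [hfactor, norm_inv, norm_pow, Complex.norm_ofNat]
  congr 1
  exact prod_congr rfl fun j _ => by split_ifs <;> rfl

lemma cosProd_nonneg (S : Finset ℕ) (θ : ℝ) : 0 ≤ cosProd S θ :=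
  prod_nonneg fun _ _ => by positivity

lemma cosProd_le_two_pow_card (S : Finset ℕ) (θ : ℝ) : cosProd S θ ≤ 2 ^ #S := by
  rw [cosProd, ← prod_const]
  exact prod_le_prod (fun _ _ => by positivity)
    fun j _ => by linarith [abs_cos_le_one (π * 2 ^ j * θ)]

lemma continuous_cosProd (S : Finset ℕ) : Continuous (cosProd S) := by
  unfold cosProd
  fun_prop

lemma cosProd_range_mul_abs_sin (L : ℕ) (x : ℝ) :
    cosProd (range L) x * |sin (π * x)| = |sin (π * 2 ^ L * x)| := by
  induction L with
  | zero => simp [cosProd]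
  | succ L ih =>
    have h : π * 2 ^ (L + 1) * x = 2 * (π * 2 ^ L * x) := by ring
    rw [cosProd, prod_range_succ, mul_right_comm, ← cosProd, ih, h, sin_two_mul, abs_mul,
      abs_mul, abs_two]
    ring

lemma cosProd_Ico_add (b L : ℕ) (θ : ℝ) :
    cosProd (Ico b (b + L)) θ = cosProd (range L) (2 ^ b * θ) := by
  rw [cosProd, prod_Ico_eq_prod_range, Nat.add_sub_cancel_left, cosProd]
  refine prod_congr rfl fun j _ => ?_
  rw [pow_add]
  ring_nf

lemma range_sdiff_insert {m n : ℕ} {s : Finset ℕ} (hs : ∀ x ∈ s, x < m) (hmn : m < n) :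
    range n \ insert m s = (range m \ s) ∪ Ico (m + 1) n := by
  ext j
  have := hs j
  simp only [mem_sdiff, mem_range, mem_insert, mem_union, mem_Ico]
  grind

lemma cosProd_range_sdiff_insert {m L : ℕ} {s : Finset ℕ} (hs : ∀ x ∈ s, x < m) (θ : ℝ) :
    cosProd (range (m + 1 + L) \ insert m s) θ
      = cosProd (range m \ s) θ * cosProd (range L) (2 ^ (m + 1) * θ) := by
  have hdisj : Disjoint (range m \ s) (Ico (m + 1) (m + 1 + L)) := by
    rw [disjoint_left]
    intro j hj hj'
    simp only [mem_sdiff, mem_range, mem_Ico] at hj hj'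
    omega
  rw [range_sdiff_insert hs (by omega), cosProd, prod_union hdisj, ← cosProd, ← cosProd,
    cosProd_Ico_add]

def dyadicCell (n y : ℕ) : Set ℝ := Set.Icc (y / 2 ^ n) ((y + 1) / 2 ^ n)

lemma pow_mul_mem_dyadicCell {b L y : ℕ} {θ : ℝ} (h : θ ∈ dyadicCell (b + L) y) :
    2 ^ b * θ ∈ dyadicCell L y := by
  obtain ⟨h1, h2⟩ := h
  have hb : (0 : ℝ) < 2 ^ b := by positivity
  rw [pow_add, mul_comm, ← div_div, div_le_iff₀ hb, mul_comm] at h1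
  rw [pow_add, mul_comm, ← div_div, le_div_iff₀ hb, mul_comm] at h2
  exact ⟨h1, h2⟩

lemma mem_dyadicCell_div {m k y : ℕ} {θ : ℝ} (h : θ ∈ dyadicCell (m + k) y) :
    θ ∈ dyadicCell m (y / 2 ^ k) := by
  obtain ⟨h1, h2⟩ := h
  have hk : (0 : ℝ) < 2 ^ k := by positivity
  have hlow : ((y / 2 ^ k : ℕ) : ℝ) * 2 ^ k ≤ y := by exact_mod_cast Nat.div_mul_le_self y _
  have hhigh : (y : ℝ) + 1 ≤ ((y / 2 ^ k : ℕ) + 1) * 2 ^ k := by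
    have : y + 1 ≤ (y / 2 ^ k + 1) * 2 ^ k := by
      rw [add_mul, one_mul]
      exact Nat.lt_div_mul_add (pow_pos two_pos k)
    exact_mod_cast this
  rw [pow_add, mul_comm, ← div_div] at h1 h2
  constructor
  · calc ((y / 2 ^ k : ℕ) : ℝ) / 2 ^ m ≤ y / 2 ^ k / 2 ^ m := by
          gcongr
          rwa [le_div_iff₀ hk]
      _ ≤ θ := h1
  · calc θ ≤ (y + 1) / 2 ^ k / 2 ^ m := h2
      _ ≤ _ := by
          gcongr
          rwa [div_le_iff₀ hk]

lemma sub_div_mem_dyadicCell_mod {L y : ℕ} {x : ℝ} (h : x ∈ dyadicCell L y) :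
    x - (y / 2 ^ L : ℕ) ∈ dyadicCell L (y % 2 ^ L) := by
  have hy : (y : ℝ) = (y % 2 ^ L : ℕ) + 2 ^ L * (y / 2 ^ L : ℕ) := by
    exact_mod_cast (Nat.mod_add_div y (2 ^ L)).symm
  have hL : (2 : ℝ) ^ L ≠ 0 := by positivity
  obtain ⟨h1, h2⟩ := h
  rw [hy, add_div, mul_div_cancel_left₀ _ hL] at h1
  rw [hy, add_right_comm, add_div, mul_div_cancel_left₀ _ hL] at h2
  constructor <;> linarith

lemma integral_le_sum_dyadicCell {g : ℝ → ℝ} (hg : Continuous g) (n : ℕ) (W : ℕ → ℝ)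
    (hW : ∀ y, ∀ θ ∈ dyadicCell n y, g θ ≤ W y) :
    ∫ θ in (0 : ℝ)..1, g θ ≤ (2 ^ n)⁻¹ * ∑ y ∈ range (2 ^ n), W y := by
  have hsum := intervalIntegral.sum_integral_adjacent_intervals (μ := MeasureTheory.volume)
    (a := fun k : ℕ => (k : ℝ) / 2 ^ n) (n := 2 ^ n) fun k _ => hg.intervalIntegrable _ _
  simp only [Nat.cast_zero, zero_div, Nat.cast_pow, Nat.cast_ofNat,
    div_self (by positivity : (2 : ℝ) ^ n ≠ 0)] at hsum
  rw [← hsum, mul_sum]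
  refine sum_le_sum fun y _ => ?_
  have hle : (y : ℝ) / 2 ^ n ≤ ((y + 1 : ℕ) : ℝ) / 2 ^ n := by gcongr; simp
  calc ∫ θ in (y : ℝ) / 2 ^ n..((y + 1 : ℕ) : ℝ) / 2 ^ n, g θ
      ≤ ∫ θ in (y : ℝ) / 2 ^ n..((y + 1 : ℕ) : ℝ) / 2 ^ n, W y :=
        intervalIntegral.integral_mono_on hle (hg.intervalIntegrable _ _) intervalIntegrable_const
          fun θ hθ => hW y θ (by simpa [dyadicCell] using hθ)
    _ = (2 ^ n)⁻¹ * W y := by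
        rw [intervalIntegral.integral_const, smul_eq_mul]
        push_cast
        ring

lemma two_mul_le_abs_sin_pi_mul {x d : ℝ} (h1 : d ≤ x) (h2 : x ≤ 1 - d) :
    2 * d ≤ |sin (π * x)| := by
  have key (w : ℝ) (hw1 : d ≤ w) (hw2 : w ≤ 1 / 2) : 2 * d ≤ |sin (π * w)| := by
    rcases le_total d 0 with hd | hd
    · linarith [abs_nonneg (sin (π * w))]
    have hsin := mul_le_sin (x := π * w) (mul_nonneg pi_pos.le (hd.trans hw1))
      (by nlinarith [pi_pos])
    rw [← mul_assoc, div_mul_cancel₀ _ pi_ne_zero] at hsin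
    linarith [le_abs_self (sin (π * w))]
  rcases le_total x (1 / 2) with hx | hx
  · exact key x h1 hx
  · simpa [mul_sub, sin_pi_sub] using key (1 - x) (by linarith) (by linarith)

/-- The number of dyadic cells of length `2^{-L}` strictly between the `v`-th one and `ℤ`. -/
def cellDist (L v : ℕ) : ℕ := min v (2 ^ L - 1 - v)

noncomputable def cellWeight (L v : ℕ) : ℝ := 2 ^ L / (cellDist L v + 1)

lemma cellWeight_nonneg (L v : ℕ) : 0 ≤ cellWeight L v := by
  unfold cellWeight
  positivity

lemma two_mul_cellDist_div_le_abs_sin {L y : ℕ} {x : ℝ} (h : x ∈ dyadicCell L y) :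
    2 * (cellDist L (y % 2 ^ L) / 2 ^ L) ≤ |sin (π * x)| := by
  set v := y % 2 ^ L
  have hv : v < 2 ^ L := Nat.mod_lt _ (pow_pos two_pos L)
  obtain ⟨h1, h2⟩ := sub_div_mem_dyadicCell_mod h
  have hdv : (cellDist L v : ℝ) ≤ v := by exact_mod_cast min_le_left _ _
  have hdv' : (cellDist L v : ℝ) + v + 1 ≤ 2 ^ L := by
    have : cellDist L v + v + 1 ≤ 2 ^ L := by
      have := min_le_right v (2 ^ L - 1 - v)
      unfold cellDist
      omega
    exact_mod_cast this
  have hsin := two_mul_le_abs_sin_pi_mul (d := cellDist L v / 2 ^ L) (h1.trans' (by gcongr))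
    (h2.trans (by rw [le_sub_iff_add_le, ← add_div, div_le_one (by positivity)]; linarith))
  rwa [mul_sub, mul_comm π (y / 2 ^ L : ℕ), sin_sub_nat_mul_pi, abs_mul, abs_pow, abs_neg,
    abs_one, one_pow, one_mul] at hsin

lemma cosProd_range_le_cellWeight {L y : ℕ} {x : ℝ} (h : x ∈ dyadicCell L y) :
    cosProd (range L) x ≤ cellWeight L (y % 2 ^ L) := by
  rw [cellWeight, le_div_iff₀ (by positivity)]
  set d := cellDist L (y % 2 ^ L)
  have htriv : cosProd (range L) x ≤ 2 ^ L := by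
    simpa using cosProd_le_two_pow_card (range L) x
  have hsin : cosProd (range L) x * (2 * d) ≤ 2 ^ L := by
    have := mul_le_mul_of_nonneg_left (two_mul_cellDist_div_le_abs_sin h)
      (cosProd_nonneg (range L) x)
    rw [cosProd_range_mul_abs_sin] at this
    calc cosProd (range L) x * (2 * d) = cosProd (range L) x * (2 * (d / 2 ^ L)) * 2 ^ L := by
          field_simp
      _ ≤ 1 * 2 ^ L := by
          gcongr
          exact this.trans (abs_sin_le_one _)
      _ = 2 ^ L := one_mul _
  rcases Nat.eq_zero_or_pos d with hd | hd
  · simpa [hd] using htriv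
  · have : (d : ℝ) + 1 ≤ 2 * d := by
      have : (1 : ℝ) ≤ d := by exact_mod_cast hd
      linarith
    exact (mul_le_mul_of_nonneg_left this (cosProd_nonneg _ _)).trans hsin

lemma sum_range_mul_div_mod {M : Type*} [AddCommMonoid M] (a b : ℕ) (F : ℕ → ℕ → M) :
    ∑ y ∈ range (a * b), F (y / b) (y % b) = ∑ i ∈ range a, ∑ j ∈ range b, F i j := by
  rw [sum_range, ← finProdFinEquiv.sum_comp, Fintype.sum_prod_type, sum_range]
  refine sum_congr rfl fun i _ => ?_
  rw [sum_range]
  refine sum_congr rfl fun j _ => ?_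
  simp [Nat.add_mul_div_left _ _ j.pos, Nat.div_eq_of_lt j.2, Nat.mod_eq_of_lt j.2]

lemma inv_min_add_one_le (a b : ℕ) :
    ((min a b : ℕ) + 1 : ℝ)⁻¹ ≤ ((a : ℝ) + 1)⁻¹ + ((b : ℝ) + 1)⁻¹ := by
  rcases le_total a b with h | h
  · rw [min_eq_left h]
    linarith [inv_nonneg.mpr (by positivity : (0 : ℝ) ≤ b + 1)]
  · rw [min_eq_right h]
    linarith [inv_nonneg.mpr (by positivity : (0 : ℝ) ≤ a + 1)]

lemma sum_cellWeight_le (L : ℕ) :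
    ∑ v ∈ range (2 ^ L), cellWeight L v ≤ 2 ^ L * (2 * (L + 1)) := by
  have hterm (v : ℕ) (_ : v ∈ range (2 ^ L)) :
      cellWeight L v ≤ 2 ^ L * (((v : ℝ) + 1)⁻¹ + (((2 ^ L - 1 - v : ℕ) : ℝ) + 1)⁻¹) := by
    rw [cellWeight, div_eq_mul_inv, cellDist]
    gcongr
    exact inv_min_add_one_le _ _
  have harmonic_le : ∑ v ∈ range (2 ^ L), ((v : ℝ) + 1)⁻¹ ≤ L + 1 := by
    have h := harmonic_le_one_add_log (2 ^ L)
    simp only [harmonic, Rat.cast_sum, Rat.cast_inv, Nat.cast_add, Nat.cast_one,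
      Rat.cast_add, Rat.cast_natCast, Rat.cast_one, Nat.cast_pow, Nat.cast_ofNat, log_pow] at h
    nlinarith [log_two_lt_d9]
  calc ∑ v ∈ range (2 ^ L), cellWeight L v
      ≤ ∑ v ∈ range (2 ^ L), 2 ^ L * (((v : ℝ) + 1)⁻¹ + (((2 ^ L - 1 - v : ℕ) : ℝ) + 1)⁻¹) :=
        sum_le_sum hterm
    _ = 2 ^ L * (2 * ∑ v ∈ range (2 ^ L), ((v : ℝ) + 1)⁻¹) := by
        rw [← mul_sum, sum_add_distrib, sum_range_reflect (fun v => (((v : ℕ) : ℝ) + 1)⁻¹),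
          two_mul]
    _ ≤ 2 ^ L * (2 * (L + 1)) := by gcongr

lemma sum_div_mul_cellWeight_mod (m L : ℕ) (W : ℕ → ℝ) :
    ∑ y ∈ range (2 ^ (m + 1 + L)), W (y / 2 ^ (L + 1)) * cellWeight L (y % 2 ^ L)
      = (∑ i ∈ range (2 ^ m), W i) * (2 * ∑ v ∈ range (2 ^ L), cellWeight L v) := by
  -- the binary digit of `y` at position `L` enters neither factor
  have hdigit : ∑ j ∈ range (2 ^ (L + 1)), cellWeight L (j % 2 ^ L)
      = 2 * ∑ v ∈ range (2 ^ L), cellWeight L v := by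
    rw [pow_succ', sum_range_mul_div_mod 2 (2 ^ L) fun _ v => cellWeight L v, sum_const,
      card_range, nsmul_eq_mul, Nat.cast_ofNat]
  rw [← hdigit, show m + 1 + L = m + (L + 1) by omega, pow_add, sum_mul_sum,
    ← sum_range_mul_div_mod]
  refine sum_congr rfl fun y _ => ?_
  rw [Nat.mod_mod_of_dvd y (pow_dvd_pow 2 L.le_succ)]

lemma le_mul_exp_div_sub_one (x : ℝ) {T : ℝ} (hT : 0 < T) : x ≤ T * exp (x / T - 1) := by
  have := add_one_le_exp (x / T - 1)
  rwa [sub_add_cancel, div_le_iff₀' hT] at this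

lemma sum_div_mul_cellWeight_mod_le {T : ℝ} (hT : 0 < T) {m L k : ℕ} {W : ℕ → ℝ}
    (hW : ∑ i ∈ range (2 ^ m), W i ≤ 2 ^ m * (2 * T) ^ k * exp (m / T - k)) :
    ∑ y ∈ range (2 ^ (m + 1 + L)), W (y / 2 ^ (L + 1)) * cellWeight L (y % 2 ^ L)
      ≤ 2 ^ (m + 1 + L) * (2 * T) ^ (k + 1) * exp ((m + 1 + L : ℕ) / T - (k + 1 : ℕ)) := by
  have hexp : exp (((m + 1 + L : ℕ) : ℝ) / T - ((k + 1 : ℕ) : ℝ))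
      = exp (m / T - k) * exp (((L : ℝ) + 1) / T - 1) := by
    rw [← exp_add]
    push_cast
    ring_nf
  rw [sum_div_mul_cellWeight_mod, hexp]
  calc _ ≤ (2 ^ m * (2 * T) ^ k * exp (m / T - k)) * (2 * (2 ^ L * (2 * (L + 1)))) :=
        mul_le_mul hW (by gcongr; exact sum_cellWeight_le L)
          (mul_nonneg zero_le_two (sum_nonneg fun v _ => cellWeight_nonneg L v)) (by positivity)
    _ ≤ (2 ^ m * (2 * T) ^ k * exp (m / T - k)) *
          (2 * (2 ^ L * (2 * (T * exp (((L : ℝ) + 1) / T - 1))))) := by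
        gcongr
        exact le_mul_exp_div_sub_one _ hT
    _ = _ := by ring

lemma exists_dyadicCell_bound_cosProd {T : ℝ} (hT : 0 < T) (A : Finset ℕ) :
    ∀ n, A ⊆ range n → (0 ∈ A ∨ n = 0) → ∃ W : ℕ → ℝ,
      (∀ y, ∀ θ ∈ dyadicCell n y, cosProd (range n \ A) θ ≤ W y) ∧
      ∑ y ∈ range (2 ^ n), W y ≤ 2 ^ n * (2 * T) ^ #A * exp (n / T - #A) := by
  induction A using Finset.induction_on_max with
  | empty =>
    rintro n - (h | rfl)
    · simp at h
    · exact ⟨1, fun y θ _ => by simp [cosProd], by simp⟩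
  | insert m s hs ih =>
    intro n hsub hzero
    have hmn : m < n := mem_range.mp (hsub (mem_insert_self m s))
    have hzero' : 0 ∈ s ∨ m = 0 := by
      rcases hzero with h | h
      · exact (mem_insert.mp h).symm.imp id Eq.symm
      · omega
    obtain ⟨W, hW, hWsum⟩ := ih m (fun j hj => mem_range.mpr (hs j hj)) hzero'
    obtain ⟨L, rfl⟩ : ∃ L, n = m + 1 + L := ⟨n - (m + 1), by omega⟩
    refine ⟨fun y => W (y / 2 ^ (L + 1)) * cellWeight L (y % 2 ^ L), fun y θ hθ => ?_, ?_⟩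
    · rw [cosProd_range_sdiff_insert hs]
      have hθ' : θ ∈ dyadicCell (m + (L + 1)) y := by
        rwa [show m + (L + 1) = m + 1 + L by omega]
      exact mul_le_mul_of_nonneg (hW _ _ (mem_dyadicCell_div hθ'))
        (cosProd_range_le_cellWeight (pow_mul_mem_dyadicCell hθ)) (cosProd_nonneg _ _)
        (cellWeight_nonneg _ _)
    · rw [card_insert_of_notMem fun h => (hs m h).false]
      exact sum_div_mul_cellWeight_mod_le hT hWsum

lemma integral_cosProd_le {n : ℕ} {A : Finset ℕ} (hA : A ⊆ range n) (h0 : 0 ∈ A) {T : ℝ}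
    (hT : 0 < T) :
    ∫ θ in (0 : ℝ)..1, cosProd (range n \ A) θ ≤ (2 * T) ^ #A * exp (n / T - #A) := by
  obtain ⟨W, hW, hWsum⟩ := exists_dyadicCell_bound_cosProd hT A n hA (Or.inl h0)
  calc ∫ θ in (0 : ℝ)..1, cosProd (range n \ A) θ
      ≤ (2 ^ n)⁻¹ * ∑ y ∈ range (2 ^ n), W y :=
        integral_le_sum_dyadicCell (continuous_cosProd _) n W hW
    _ ≤ (2 ^ n)⁻¹ * (2 ^ n * (2 * T) ^ #A * exp (n / T - #A)) := by gcongr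
    _ = (2 * T) ^ #A * exp (n / T - #A) := by rw [mul_assoc, inv_mul_cancel_left₀ (by positivity)]

lemma four_mul_le_two_rpow {T : ℝ} (hT : 2 ≤ T) : 4 * T ≤ (2 : ℝ) ^ (5 * log T) := by
  have hlog : log 2 ≤ log T := log_le_log two_pos hT
  rw [← exp_log (by positivity : 0 < 4 * T), rpow_def_of_pos two_pos, exp_le_exp,
    log_mul (by norm_num) (by positivity), show (4 : ℝ) = 2 ^ 2 by norm_num, log_pow,
    Nat.cast_ofNat]
  nlinarith [log_two_gt_d9, log_pos one_lt_two]

lemma two_pow_mul_pow_le_two_rpow {T : ℝ} (hT : 2 ≤ T) (r : ℕ) :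
    2 ^ r * (2 * T) ^ (r + 1) ≤ (2 : ℝ) ^ (5 * (r + 1) * log T) := by
  calc 2 ^ r * (2 * T) ^ (r + 1) ≤ 2 ^ (r + 1) * (2 * T) ^ (r + 1) := by
        gcongr
        · exact one_le_two
        · exact r.le_succ
    _ = (4 * T) ^ (r + 1) := by rw [← mul_pow, ← mul_assoc]; norm_num
    _ ≤ ((2 : ℝ) ^ (5 * log T)) ^ (r + 1) := by gcongr; exact four_mul_le_two_rpow hT
    _ = (2 : ℝ) ^ (5 * (r + 1) * log T) := by
        rw [← rpow_natCast, ← rpow_mul zero_le_two]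
        push_cast
        ring_nf

/-- `2^r ∫_0^1 |\hat f(θ)| dθ ≤ 2^{C ρ log(1/ρ) n - n}` for admissible digit
data with `ρ = (r+1)/n ≤ 1/2`. -/
theorem integral_abs_fhat_bound :
    ∃ C : ℝ, 0 < C ∧ ∀ (n : ℕ) (A : Finset ℕ) (α : ℕ → ℕ) (r : ℕ),
      A ⊆ Finset.range n → 0 ∈ A → (∀ j ∈ A, α j ≤ 1) → α 0 = 1 → A.card = r + 1 →
      ((r : ℝ) + 1) / n ≤ 1 / 2 →
      (2 : ℝ) ^ r * ∫ θ in (0 : ℝ)..1, ‖fhat n A α θ‖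
        ≤ (2 : ℝ) ^
            (C * (((r : ℝ) + 1) / n) * Real.log (1 / (((r : ℝ) + 1) / n)) * n - n) := by
  refine ⟨5, by norm_num, fun n A α r hA h0 hα _ hcard hρ => ?_⟩
  have hn : (0 : ℝ) < n := by exact_mod_cast (mem_range.mp (hA h0)).bot_lt
  set T : ℝ := n / (r + 1) with hTdef
  have hT : 2 ≤ T := by
    rw [div_le_iff₀ hn] at hρ
    rw [le_div_iff₀ (by positivity)]
    linarith
  have hint : ∫ θ in (0 : ℝ)..1, ‖fhat n A α θ‖ ≤ (2 ^ n)⁻¹ * (2 * T) ^ (r + 1) := by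
    have h := integral_cosProd_le hA h0 (T := T) (by linarith)
    rw [hcard, hTdef, div_div_cancel₀ hn.ne', Nat.cast_succ, sub_self, exp_zero, mul_one] at h
    simp_rw [norm_fhat hA hα, intervalIntegral.integral_const_mul]
    gcongr
  have hexponent : 5 * (((r : ℝ) + 1) / n) * log (1 / (((r : ℝ) + 1) / n)) * n - n
      = 5 * (r + 1) * log T - n := by
    rw [one_div_div, ← hTdef]
    field_simp
  rw [hexponent, rpow_sub two_pos, rpow_natCast]
  calc (2 : ℝ) ^ r * ∫ θ in (0 : ℝ)..1, ‖fhat n A α θ‖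
      ≤ 2 ^ r * ((2 ^ n)⁻¹ * (2 * T) ^ (r + 1)) := by gcongr
    _ = 2 ^ r * (2 * T) ^ (r + 1) / 2 ^ n := by ring
    _ ≤ _ := by gcongr; exact two_pow_mul_pow_le_two_rpow hT r
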